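/- arXiv:1310.5420 — 9 statements merged into one kernel-verified Lean document; each statement's English description precedes it below -/
import Mathlib

section
/- Define the jammer strategy ẏ by ẏ_0 = Z_n/Z_0, ẏ_n = 1 − Z_n/Z_0, and ẏ_j = 0 for 0 < j < n. Then ẏ is a mixed strategy, its average power satisfies Σ_{j=0}^n ẏ_j J_j = (1 − Z_n/Z_0)·J_max < J_max, and for every mixed strategy x of the transmitter, xᵀZẏ ≤ Z_n. -/
open Finset

/-- A mixed strategy on `{0, …, n}`: nonnegative entries summing to 1. -/
def IsMixed (n : ℕ) (x : ℕ → ℝ) : Prop :=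
  (∀ i ∈ Finset.range (n + 1), 0 ≤ x i) ∧ ∑ i ∈ Finset.range (n + 1), x i = 1

/-- Expected payoff `xᵀ Z y` for the lower-triangular payoff matrix `Z(i,j) = Zᵢ` if `j ≤ i`,
`0` otherwise. -/
noncomputable def pay (n : ℕ) (Z : ℕ → ℝ) (x y : ℕ → ℝ) : ℝ :=
  ∑ i ∈ Finset.range (n + 1), ∑ j ∈ Finset.range (n + 1),
    x i * (if j ≤ i then Z i else 0) * y j

/-- The average jamming power of the strategy `y`. -/
noncomputable def avgPow (n : ℕ) (J y : ℕ → ℝ) : ℝ :=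
  ∑ j ∈ Finset.range (n + 1), y j * J j

/-- The jammer's feasible set: mixed strategies of average power at most `Jave`. -/
def YLE (n : ℕ) (J : ℕ → ℝ) (Jave : ℝ) (y : ℕ → ℝ) : Prop :=
  IsMixed n y ∧ avgPow n J y ≤ Jave

/-- The critical average jamming power `J_{ave,m} = Z_m ∑_{j=1}^m (Z_j⁻¹ - Z_{j-1}⁻¹) J_j`. -/
noncomputable def JaveM (m : ℕ) (J Z : ℕ → ℝ) : ℝ :=
  Z m * ∑ j ∈ Finset.Icc 1 m, ((Z j)⁻¹ - (Z (j - 1))⁻¹) * J j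

/-! Against `ẏ` the pure row `i < n` earns `Zᵢ · Z_n / Z₀ ≤ Z_n` and row `n` earns exactly
`Z_n`, so no mixture of rows earns more than `Z_n`. -/

noncomputable def twoPoint (n : ℕ) (p : ℝ) (j : ℕ) : ℝ :=
  if j = 0 then p else if j = n then 1 - p else 0

section TwoPoint

variable {n : ℕ} {p : ℝ}

theorem sum_range_mul_twoPoint (hn : n ≠ 0) (f : ℕ → ℝ) :
    ∑ j ∈ range (n + 1), f j * twoPoint n p j = p * f 0 + (1 - p) * f n := by
  rw [Finset.sum_eq_add 0 n hn.symm (fun j _ hj => by simp [twoPoint, hj.1, hj.2])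
    (by simp) (by simp)]
  simp [twoPoint, hn, mul_comm]

theorem isMixed_twoPoint (hn : n ≠ 0) (hp₀ : 0 ≤ p) (hp₁ : p ≤ 1) :
    IsMixed n (twoPoint n p) := by
  refine ⟨fun j _ => ?_, ?_⟩
  · unfold twoPoint
    split_ifs <;> linarith
  · simpa using sum_range_mul_twoPoint (p := p) hn (fun _ => 1)

theorem avgPow_twoPoint (hn : n ≠ 0) (J : ℕ → ℝ) :
    avgPow n J (twoPoint n p) = p * J 0 + (1 - p) * J n := by
  simp only [avgPow, mul_comm (twoPoint n p _)]
  exact sum_range_mul_twoPoint hn J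

theorem row_payoff_twoPoint (hn : n ≠ 0) (Z : ℕ → ℝ) {i : ℕ} (hi : i ≤ n) :
    ∑ j ∈ range (n + 1), (if j ≤ i then Z i else 0) * twoPoint n p j =
      if i = n then Z i else p * Z i := by
  rw [sum_range_mul_twoPoint hn]
  by_cases h : i = n
  · subst h
    simp only [Nat.zero_le, le_refl, if_true]
    ring
  · simp [h, show ¬ n ≤ i by omega]

end TwoPoint

theorem pay_le_of_row_le {n : ℕ} {Z x y : ℕ → ℝ} {c : ℝ} (hx : IsMixed n x)
    (hrow : ∀ i ≤ n, ∑ j ∈ range (n + 1), (if j ≤ i then Z i else 0) * y j ≤ c) :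
    pay n Z x y ≤ c :=
  calc pay n Z x y
      = ∑ i ∈ range (n + 1), x i * ∑ j ∈ range (n + 1), (if j ≤ i then Z i else 0) * y j := by
        simp only [pay, mul_sum, mul_assoc]
    _ ≤ ∑ i ∈ range (n + 1), x i * c := by
        gcongr with i hi
        · exact hx.1 i hi
        · exact hrow i (Nat.lt_succ_iff.mp (mem_range.mp hi))
    _ = c := by rw [← sum_mul, hx.2, one_mul]

/-- the strategy `ẏ` putting mass `Z_n/Z_0` at `0` and `1 - Z_n/Z_0` at `n`
is a mixed strategy with average power `(1 - Z_n/Z_0) J_max < J_max`, and it forces the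
expected payoff down to at most `Z_n`. -/
theorem stmt_1 (n : ℕ) (hn : 1 ≤ n) (J Z : ℕ → ℝ)
    (hJ0 : J 0 = 0) (hJmono : ∀ j < n, J j < J (j + 1))
    (hZanti : ∀ j < n, Z (j + 1) < Z j) (hZpos : 0 < Z n)
    (ydot : ℕ → ℝ)
    (hy : ∀ j, ydot j = if j = 0 then Z n / Z 0 else if j = n then 1 - Z n / Z 0 else 0) :
    IsMixed n ydot ∧
    avgPow n J ydot = (1 - Z n / Z 0) * J n ∧
    (1 - Z n / Z 0) * J n < J n ∧
    (∀ x : ℕ → ℝ, IsMixed n x → pay n Z x ydot ≤ Z n) := by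
  have hn₀ : n ≠ 0 := by omega
  obtain rfl : ydot = twoPoint n (Z n / Z 0) := funext hy
  have hZ : AntitoneOn Z (Set.Iic n) :=
    (strictAntiOn_Iic_of_succ_lt fun m hm => by simpa using hZanti m hm).antitoneOn
  have hZ_le : ∀ i ≤ n, Z i ≤ Z 0 := fun i hi => hZ (Nat.zero_le n) hi (Nat.zero_le i)
  have hZ₀ : 0 < Z 0 := hZpos.trans_le (hZ_le n le_rfl)
  have hJn : 0 < J n := hJ0 ▸
    strictMonoOn_Iic_of_lt_succ (fun m hm => by simpa using hJmono m hm)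
      (Nat.zero_le n) (le_refl n) (Nat.pos_of_ne_zero hn₀)
  have hp : 0 < Z n / Z 0 := div_pos hZpos hZ₀
  refine ⟨isMixed_twoPoint hn₀ hp.le ((div_le_one hZ₀).mpr (hZ_le n le_rfl)), ?_, ?_,
    fun x hx => pay_le_of_row_le hx fun i hi => ?_⟩
  · rw [avgPow_twoPoint hn₀, hJ0]; ring
  · linarith [mul_pos hp hJn]
  · rw [row_payoff_twoPoint hn₀ Z hi]
    split_ifs with h
    · rw [h]
    · calc Z n / Z 0 * Z i ≤ Z n / Z 0 * Z 0 := by gcongr; exact hZ_le i hi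
        _ = Z n := div_mul_cancel₀ _ hZ₀.ne'
end

section
/- Define the jammer strategy ẏ by ẏ_0 = Z_n/Z_0, ẏ_n = 1 − Z_n/Z_0, and ẏ_j = 0 for 0 < j < n. Then for every mixed strategy x of the transmitter, xᵀZẏ = Z_n·[(x_0 + x_n) + Σ_{i=1}^{n−1} (Z_i/Z_0)·x_i], and consequently xᵀZẏ ≤ Z_n with equality if and only if x_0 + x_n = 1. -/
open Finset

/-
Only the cumulative sums `Y_i = ∑_{j ≤ i} y_j` of the jammer's strategy enter the payoff, which is
`∑_i x_i Z_i Y_i`. For `ẏ` they are `Z_n / Z_0` below `n` and `1` at `n`, so the payoff is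
`Z_n` times a mixture of the weights `1` (on `x_0`, `x_n`) and `Z_i / Z_0 < 1` (on the interior
`x_i`); it reaches `Z_n` exactly when the interior carries no mass.
-/

theorem Finset.sum_range_succ_eq_add_sum_Icc_add {M : Type*} [AddCommMonoid M] {n : ℕ}
    (hn : 1 ≤ n) (f : ℕ → M) :
    ∑ i ∈ range (n + 1), f i = f 0 + ∑ i ∈ Icc 1 (n - 1), f i + f n := by
  obtain ⟨m, rfl⟩ : ∃ m, n = m + 1 := ⟨n - 1, by omega⟩
  rw [sum_range_succ, sum_range_eq_add_Ico _ (by omega : 0 < m + 1), Nat.add_sub_cancel,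
    Ico_add_one_right_eq_Icc]

theorem Finset.sum_range_succ_eq_of_eqOn_Ioo {M : Type*} [AddCommMonoid M] {n i : ℕ} {y : ℕ → M}
    (hy : Set.EqOn y 0 (Set.Ioo 0 n)) (hi : i < n) :
    ∑ j ∈ range (i + 1), y j = y 0 := by
  rw [sum_range_succ', sum_eq_zero fun j hj => hy ⟨j.succ_pos, by grind⟩, zero_add]

theorem Finset.sum_mul_eq_sum_iff {ι : Type*} {s : Finset ι} {w x : ι → ℝ}
    (hx : ∀ i ∈ s, 0 ≤ x i) (hw : ∀ i ∈ s, w i < 1) :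
    ∑ i ∈ s, w i * x i = ∑ i ∈ s, x i ↔ ∑ i ∈ s, x i = 0 := by
  rw [sum_eq_sum_iff_of_le fun i hi => mul_le_of_le_one_left (hx i hi) (hw i hi).le,
    sum_eq_zero_iff_of_nonneg hx]
  refine forall₂_congr fun i hi => ⟨fun h => ?_, fun h => by rw [h, mul_zero]⟩
  by_contra hxi
  exact (hw i hi).ne ((mul_eq_right₀ hxi).1 h)

section Mixture

variable {ι : Type*} {s : Finset ι} {w x : ι → ℝ} {a b : ℝ}

theorem add_add_sum_mul_le_one (hx : ∀ i ∈ s, 0 ≤ x i) (hw : ∀ i ∈ s, w i ≤ 1)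
    (hsum : a + ∑ i ∈ s, x i + b = 1) :
    a + b + ∑ i ∈ s, w i * x i ≤ 1 := by
  have hle : ∑ i ∈ s, w i * x i ≤ ∑ i ∈ s, x i :=
    sum_le_sum fun i hi => mul_le_of_le_one_left (hx i hi) (hw i hi)
  linarith

theorem add_add_sum_mul_eq_one_iff (hx : ∀ i ∈ s, 0 ≤ x i) (hw : ∀ i ∈ s, w i < 1)
    (hsum : a + ∑ i ∈ s, x i + b = 1) :
    a + b + ∑ i ∈ s, w i * x i = 1 ↔ a + b = 1 := by
  have hiff := sum_mul_eq_sum_iff hx hw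
  constructor <;> intro h
  · linarith [hiff.1 (by linarith)]
  · linarith [hiff.2 (by linarith)]

end Mixture

theorem pay_eq_sum_mul_sum_range (n : ℕ) (Z x y : ℕ → ℝ) :
    pay n Z x y = ∑ i ∈ range (n + 1), x i * Z i * ∑ j ∈ range (i + 1), y j := by
  refine sum_congr rfl fun i hi => ?_
  have hfilter : (range (n + 1)).filter (· ≤ i) = range (i + 1) := by
    ext j; simp only [mem_filter, mem_range]; grind
  simp_rw [mul_ite, ite_mul, mul_zero, zero_mul, ← sum_filter, hfilter, mul_sum]

theorem pay_eq_of_eqOn_Ioo {n : ℕ} (hn : 1 ≤ n) (Z x : ℕ → ℝ) {y : ℕ → ℝ}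
    (hy : Set.EqOn y 0 (Set.Ioo 0 n)) :
    pay n Z x y
      = y 0 * (x 0 * Z 0 + ∑ i ∈ Icc 1 (n - 1), x i * Z i) + x n * Z n * (y 0 + y n) := by
  have hY : ∀ i < n, ∑ j ∈ range (i + 1), y j = y 0 := fun i => sum_range_succ_eq_of_eqOn_Ioo hy
  have hYlast : ∑ j ∈ range n, y j = y 0 := by
    simpa [Nat.sub_add_cancel hn] using hY (n - 1) (by omega)
  rw [pay_eq_sum_mul_sum_range, sum_range_succ_eq_add_sum_Icc_add hn, hY 0 (by omega),
    sum_congr rfl fun i hi => by rw [hY i (by simp at hi; omega)], sum_range_succ, hYlast,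
    ← sum_mul]
  ring

theorem pay_eq_of_eq_ite {n : ℕ} (hn : 1 ≤ n) {Z : ℕ → ℝ} (hZ0 : Z 0 ≠ 0) {y : ℕ → ℝ}
    (hy : ∀ j, y j = if j = 0 then Z n / Z 0 else if j = n then 1 - Z n / Z 0 else 0)
    (x : ℕ → ℝ) :
    pay n Z x y = Z n * ((x 0 + x n) + ∑ i ∈ Icc 1 (n - 1), (Z i / Z 0) * x i) := by
  have hy0 : y 0 = Z n / Z 0 := by simp [hy]
  have hyn : y n = 1 - Z n / Z 0 := by simp [hy, show n ≠ 0 by omega]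
  have hinterior : Z n / Z 0 * ∑ i ∈ Icc 1 (n - 1), x i * Z i
      = Z n * ∑ i ∈ Icc 1 (n - 1), Z i / Z 0 * x i := by
    simp only [mul_sum]
    exact sum_congr rfl fun i _ => by ring
  rw [pay_eq_of_eqOn_Ioo hn Z x fun j hj => by simp [hy, hj.1.ne', hj.2.ne], hy0, hyn, mul_add,
    hinterior]
  field_simp
  ring

theorem stmt_2_general (n : ℕ) (hn : 1 ≤ n) (Z : ℕ → ℝ)
    (hZanti : ∀ j < n, Z (j + 1) < Z j) (hZpos : 0 < Z n)
    (ydot : ℕ → ℝ)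
    (hy : ∀ j, ydot j = if j = 0 then Z n / Z 0 else if j = n then 1 - Z n / Z 0 else 0) :
    ∀ x : ℕ → ℝ, IsMixed n x →
      pay n Z x ydot
        = Z n * ((x 0 + x n) + ∑ i ∈ Finset.Icc 1 (n - 1), (Z i / Z 0) * x i) ∧
      pay n Z x ydot ≤ Z n ∧
      (pay n Z x ydot = Z n ↔ x 0 + x n = 1) := by
  intro x ⟨hx, hxsum⟩
  have hZ : StrictAntiOn Z (Set.Iic n) := strictAntiOn_Iic_of_succ_lt hZanti
  have hZ0 : 0 < Z 0 := hZpos.trans (hZ (by simp) (by simp) (by omega))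
  have hpay := pay_eq_of_eq_ite hn hZ0.ne' hy x
  have hxI : ∀ i ∈ Icc 1 (n - 1), 0 ≤ x i := fun i hi => hx i (by simp at hi ⊢; omega)
  have hwI : ∀ i ∈ Icc 1 (n - 1), Z i / Z 0 < 1 := fun i hi =>
    (div_lt_one hZ0).2 (hZ (by simp) (by simp at hi ⊢; omega) (by simp at hi; omega))
  have hsplit := sum_range_succ_eq_add_sum_Icc_add hn x ▸ hxsum
  refine ⟨hpay, ?_, ?_⟩ <;> rw [hpay]
  · simpa using mul_le_mul_of_nonneg_left
      (add_add_sum_mul_le_one hxI (fun i hi => (hwI i hi).le) hsplit) hZpos.le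
  · rw [mul_eq_left₀ hZpos.ne', add_add_sum_mul_eq_one_iff hxI hwI hsplit]

/-- against the strategy `ẏ` of Theorem 1, the expected payoff of any mixed
strategy `x` equals `Z_n ((x_0 + x_n) + ∑_{i=1}^{n-1} (Z_i/Z_0) x_i)`, hence is at most `Z_n`,
with equality iff `x_0 + x_n = 1`. -/
theorem stmt_2 (n : ℕ) (hn : 1 ≤ n) (J Z : ℕ → ℝ)
    (hJ0 : J 0 = 0) (hJmono : ∀ j < n, J j < J (j + 1))
    (hZanti : ∀ j < n, Z (j + 1) < Z j) (hZpos : 0 < Z n)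
    (ydot : ℕ → ℝ)
    (hy : ∀ j, ydot j = if j = 0 then Z n / Z 0 else if j = n then 1 - Z n / Z 0 else 0) :
    ∀ x : ℕ → ℝ, IsMixed n x →
      pay n Z x ydot
        = Z n * ((x 0 + x n) + ∑ i ∈ Finset.Icc 1 (n - 1), (Z i / Z 0) * x i) ∧
      pay n Z x ydot ≤ Z n ∧
      (pay n Z x ydot = Z n ↔ x 0 + x n = 1) :=
  stmt_2_general n hn Z hZanti hZpos ydot hy
end

section
/- For every 0 ≤ m < n one has J_{ave,m} < J_{m+1}, and the vector x̂ defined by x̂_i = Z_m·(J_{i+1} − J_i) / ((J_{m+1} − J_{ave,m})·Z_i) for 0 ≤ i ≤ m and x̂_i = 0 for i > m is a mixed strategy; moreover, for every jammer mixed strategy y with average power Σ_{j=0}^n y_j J_j ≤ J_{ave,m}, the expected payoff satisfies x̂ᵀZy ≥ Z_m. -/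
open Finset

/-! The equalizing strategy `x̂` spreads its mass in proportion to `(J_{i+1} - J_i) / Z_i`, the
normalizing constant `S = ∑_{i ≤ m} (J_{i+1} - J_i) / Z_i` being `(J_{m+1} - J_{ave,m}) / Z_m` by
summation by parts. Against the lower-triangular matrix the payoff is
`∑_{i ≤ m} x̂_i Z_i F_i = S⁻¹ ∑_{i ≤ m} (J_{i+1} - J_i) F_i` with `F` the distribution function of
the jammer's strategy `y`; exchanging the sums turns this into `S⁻¹ ∑_{j ≤ m} y_j (J_{m+1} - J_j)`,
which dominates `S⁻¹ (J_{m+1} - ∑_j y_j J_j)` because `J` is increasing. The power constraint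
bounds the latter below by `S⁻¹ (J_{m+1} - J_{ave,m}) = Z_m`. -/

section Sums

variable {R : Type*} [CommRing R]

theorem sum_range_sub_mul_by_parts (a w : ℕ → R) (m : ℕ) :
    ∑ i ∈ range (m + 1), (a (i + 1) - a i) * w i
      = a (m + 1) * w m - a 0 * w 0 - ∑ j ∈ Icc 1 m, (w j - w (j - 1)) * a j := by
  induction m with
  | zero => simp only [zero_add, sum_range_one, Icc_eq_empty_of_lt one_pos, sum_empty]; ring
  | succ k ih =>
    rw [sum_range_succ, ih, sum_Icc_succ_top (by omega), Nat.add_sub_cancel]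
    ring

theorem sum_range_sub_mul_sum_range (a y : ℕ → R) (M : ℕ) :
    ∑ i ∈ range (M + 1), (a (i + 1) - a i) * ∑ j ∈ range (i + 1), y j
      = ∑ j ∈ range (M + 1), y j * (a (M + 1) - a j) := by
  induction M with
  | zero => simp only [zero_add, sum_range_one]; ring
  | succ k ih =>
    rw [sum_range_succ, ih, sum_range_succ (fun j => y j * (a (k + 1 + 1) - a j)),
      sum_range_succ y, mul_add, mul_sum, ← add_assoc, ← sum_add_distrib]
    congr 1
    · exact sum_congr rfl fun j _ => by ring
    · ring

theorem sum_range_ite_le {M : Type*} [AddCommMonoid M] (f : ℕ → M) {m n : ℕ} (h : m ≤ n) :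
    ∑ i ∈ range (n + 1), (if i ≤ m then f i else 0) = ∑ i ∈ range (m + 1), f i := by
  rw [← sum_filter]
  congr 1
  ext i
  simp only [mem_filter, mem_range]
  omega

end Sums

theorem sub_JaveM_eq_mul_sum {J Z : ℕ → ℝ} (hJ0 : J 0 = 0) {m : ℕ} (hZm : Z m ≠ 0) :
    J (m + 1) - JaveM m J Z = Z m * ∑ i ∈ range (m + 1), (J (i + 1) - J i) / Z i := by
  simp_rw [div_eq_mul_inv]
  rw [sum_range_sub_mul_by_parts, JaveM, hJ0]
  field_simp
  ring

theorem sub_avgPow_le_sum_range_sub_mul_sum_range {n m : ℕ} {J y : ℕ → ℝ} (hmn : m < n)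
    (hJ : MonotoneOn J (Set.Iic n)) (hy : IsMixed n y) :
    J (m + 1) - avgPow n J y
      ≤ ∑ i ∈ range (m + 1), (J (i + 1) - J i) * ∑ j ∈ range (i + 1), y j := by
  have hpow : J (m + 1) - avgPow n J y = ∑ j ∈ range (n + 1), y j * (J (m + 1) - J j) := by
    simp only [avgPow, mul_sub, sum_sub_distrib, ← sum_mul, hy.2, one_mul]
  rw [sum_range_sub_mul_sum_range, hpow]
  refine sum_le_sum_of_subset_of_nonpos' (range_subset_range.2 (by omega)) fun j hj hjm => ?_
  simp only [mem_range] at hj hjm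
  exact mul_nonpos_of_nonneg_of_nonpos (hy.1 j (mem_range.2 hj))
    (sub_nonpos.2 (hJ (Set.mem_Iic.2 (by omega)) (Set.mem_Iic.2 (by omega)) (by omega)))

theorem isMixed_ite_div_sum {n m : ℕ} (hmn : m ≤ n) {w : ℕ → ℝ} (hw : ∀ i ≤ m, 0 ≤ w i)
    (hS : 0 < ∑ i ∈ range (m + 1), w i) :
    IsMixed n fun i => if i ≤ m then w i / ∑ k ∈ range (m + 1), w k else 0 := by
  refine ⟨fun i _ => ?_, ?_⟩
  · dsimp only
    split_ifs with hi
    · exact div_nonneg (hw i hi) hS.le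
    · exact le_rfl
  · rw [sum_range_ite_le _ hmn, ← sum_div, div_self hS.ne']

theorem pay_ite_div_eq {n m : ℕ} (hmn : m ≤ n) {J Z : ℕ → ℝ} (hZ : ∀ i ≤ m, Z i ≠ 0) (S : ℝ)
    (y : ℕ → ℝ) :
    pay n Z (fun i => if i ≤ m then (J (i + 1) - J i) / Z i / S else 0) y
      = (∑ i ∈ range (m + 1), (J (i + 1) - J i) * ∑ j ∈ range (i + 1), y j) / S := by
  simp only [pay_eq_sum_mul_sum_range, ite_mul, zero_mul]
  rw [sum_range_ite_le _ hmn, sum_div]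
  refine sum_congr rfl fun i hi => ?_
  have := hZ i (Nat.lt_succ_iff.1 (mem_range.1 hi))
  field_simp

theorem stmt_5_general (n : ℕ) (J Z : ℕ → ℝ)
    (hJ0 : J 0 = 0) (hJmono : ∀ j < n, J j < J (j + 1))
    (hZanti : ∀ j < n, Z (j + 1) < Z j) (hZpos : 0 < Z n)
    (m : ℕ) (hm : m < n) (xhat : ℕ → ℝ)
    (hx : ∀ i, xhat i = if i ≤ m then
      Z m * (J (i + 1) - J i) / ((J (m + 1) - JaveM m J Z) * Z i) else 0) :
    JaveM m J Z < J (m + 1) ∧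
    IsMixed n xhat ∧
    (∀ y : ℕ → ℝ, IsMixed n y → avgPow n J y ≤ JaveM m J Z →
      Z m ≤ pay n Z xhat y) := by
  have hZ : ∀ i ≤ m, 0 < Z i := fun i hi => hZpos.trans_le <|
    (strictAntiOn_Iic_of_succ_lt hZanti).antitoneOn (Set.mem_Iic.2 (by omega)) Set.self_mem_Iic
      (by omega)
  have hw : ∀ i ≤ m, 0 < (J (i + 1) - J i) / Z i :=
    fun i hi => div_pos (sub_pos.2 (hJmono i (by omega))) (hZ i hi)
  set S := ∑ i ∈ range (m + 1), (J (i + 1) - J i) / Z i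
  have hS : 0 < S := sum_pos (fun i hi => hw i (Nat.lt_succ_iff.1 (mem_range.1 hi)))
    nonempty_range_add_one
  have hkey : J (m + 1) - JaveM m J Z = Z m * S := sub_JaveM_eq_mul_sum hJ0 (hZ m le_rfl).ne'
  obtain rfl : xhat = fun i => if i ≤ m then (J (i + 1) - J i) / Z i / S else 0 := by
    funext i
    rw [hx, hkey]
    have := (hZ m le_rfl).ne'
    split_ifs with hi
    · have := (hZ i hi).ne'
      field_simp
    · rfl
  refine ⟨sub_pos.1 (hkey ▸ mul_pos (hZ m le_rfl) hS), isMixed_ite_div_sum hm.le (fun i hi => (hw i hi).le) hS,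
    fun y hy hyJ => ?_⟩
  rw [pay_ite_div_eq hm.le (fun i hi => (hZ i hi).ne'), le_div_iff₀ hS]
  calc Z m * S = J (m + 1) - JaveM m J Z := hkey.symm
    _ ≤ J (m + 1) - avgPow n J y := by linarith
    _ ≤ _ := sub_avgPow_le_sum_range_sub_mul_sum_range hm
        (strictMonoOn_Iic_of_lt_succ hJmono).monotoneOn hy

/-- for `0 ≤ m < n`, `J_{ave,m} < J_{m+1}`, the equalizing strategy `x̂` with
`x̂_i = Z_m (J_{i+1} - J_i)/((J_{m+1} - J_{ave,m}) Z_i)` for `i ≤ m` (and `0` otherwise)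
is a mixed strategy, and it guarantees payoff at least `Z_m` against every jammer
mixed strategy of average power at most `J_{ave,m}`. -/
theorem stmt_5 (n : ℕ) (hn : 1 ≤ n) (J Z : ℕ → ℝ)
    (hJ0 : J 0 = 0) (hJmono : ∀ j < n, J j < J (j + 1))
    (hZanti : ∀ j < n, Z (j + 1) < Z j) (hZpos : 0 < Z n)
    (m : ℕ) (hm : m < n) (xhat : ℕ → ℝ)
    (hx : ∀ i, xhat i = if i ≤ m then
      Z m * (J (i + 1) - J i) / ((J (m + 1) - JaveM m J Z) * Z i) else 0) :
    JaveM m J Z < J (m + 1) ∧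
    IsMixed n xhat ∧
    (∀ y : ℕ → ℝ, IsMixed n y → avgPow n J y ≤ JaveM m J Z →
      Z m ≤ pay n Z xhat y) :=
  stmt_5_general n J Z hJ0 hJmono hZanti hZpos m hm xhat hx
end

section
/- For 0 ≤ m < n, let x̂ be the transmitter strategy with x̂_i = Z_m·(J_{i+1} − J_i) / ((J_{m+1} − J_{ave,m})·Z_i) for 0 ≤ i ≤ m and x̂_i = 0 for i > m. Then for every jammer mixed strategy y whose support is contained in {0, …, m} (i.e., y_j = 0 for j > m), the expected payoff is exactly x̂ᵀZy = ((J_{m+1} − Σ_{j=0}^m y_j J_j) / (J_{m+1} − J_{ave,m}))·Z_m; in particular x̂ equalizes: the payoff depends on y only through its average power. -/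
open Finset

/-!
Against `x̂`, the column `j` of `Z` earns `∑_{i ≥ j} x̂ᵢ Zᵢ`. Since `x̂ᵢ Zᵢ` is proportional to the
increment `J_{i+1} - J_i`, this tail sum telescopes to a multiple of `J_{m+1} - J_j`, which is affine
in `J_j`; averaging over `y` then gives an affine function of the average power.
-/

theorem sum_range_succ_eq_of_eq_zero {M : Type*} [AddCommMonoid M] {f : ℕ → M} {m n : ℕ}
    (hmn : m ≤ n) (hf : ∀ j, m < j → f j = 0) :
    ∑ j ∈ range (m + 1), f j = ∑ j ∈ range (n + 1), f j :=
  sum_subset (range_subset_range.2 (by omega)) fun j _ hj => hf j (by simpa using hj)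

theorem pay_eq_pay_of_support {m n : ℕ} (hmn : m ≤ n) (Z : ℕ → ℝ) {x y : ℕ → ℝ}
    (hx : ∀ i, m < i → x i = 0) (hy : ∀ j, m < j → y j = 0) :
    pay n Z x y = pay m Z x y := by
  unfold pay
  rw [← sum_range_succ_eq_of_eq_zero hmn fun i hi => by simp [hx i hi]]
  refine sum_congr rfl fun i _ => (sum_range_succ_eq_of_eq_zero hmn fun j hj => ?_).symm
  simp [hy j hj]

theorem pay_eq_sum_tail_mul (n : ℕ) (Z x y : ℕ → ℝ) :
    pay n Z x y = ∑ j ∈ range (n + 1), (∑ i ∈ Icc j n, x i * Z i) * y j := by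
  unfold pay
  rw [sum_comm]
  refine sum_congr rfl fun j _ => ?_
  simp only [mul_ite, ite_mul, mul_zero, zero_mul, sum_mul, ← sum_filter]
  congr 1
  ext i
  simp only [mem_filter, mem_range, mem_Icc]
  omega

theorem pay_eq_of_mul_eq_mul_sub {m : ℕ} {Z x J : ℕ → ℝ} {c : ℝ}
    (hxZ : ∀ i ≤ m, x i * Z i = c * (J (i + 1) - J i)) (y : ℕ → ℝ) :
    pay m Z x y
      = c * (J (m + 1) * ∑ j ∈ range (m + 1), y j - ∑ j ∈ range (m + 1), y j * J j) := by
  have column : ∀ j ∈ range (m + 1),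
      (∑ i ∈ Icc j m, x i * Z i) * y j = c * (J (m + 1) * y j - y j * J j) := by
    intro j hj
    rw [sum_congr rfl fun i hi => hxZ i (mem_Icc.1 hi).2, ← mul_sum,
      sum_Icc_sub (by simpa [Nat.lt_succ_iff] using hj)]
    ring
  rw [pay_eq_sum_tail_mul, sum_congr rfl column, ← mul_sum, sum_sub_distrib, mul_sum]

theorem stmt_6_general (n : ℕ) (J Z : ℕ → ℝ)
    (hZanti : ∀ j < n, Z (j + 1) < Z j) (hZpos : 0 < Z n)
    (m : ℕ) (hm : m < n) (xhat : ℕ → ℝ)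
    (hx : ∀ i, xhat i = if i ≤ m then
      Z m * (J (i + 1) - J i) / ((J (m + 1) - JaveM m J Z) * Z i) else 0) :
    ∀ y : ℕ → ℝ, IsMixed n y → (∀ j, m < j → y j = 0) →
      pay n Z xhat y
        = ((J (m + 1) - ∑ j ∈ Finset.range (m + 1), y j * J j)
            / (J (m + 1) - JaveM m J Z)) * Z m := by
  intro y hy hysupp
  have hZ : ∀ i ≤ n, 0 < Z i := fun i hi =>
    hZpos.trans_le ((strictAntiOn_Iic_of_succ_lt hZanti).antitoneOn hi (Set.mem_Iic.2 le_rfl) hi)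
  have hxZ : ∀ i ≤ m, xhat i * Z i = Z m / (J (m + 1) - JaveM m J Z) * (J (i + 1) - J i) := by
    intro i hi
    rw [hx, if_pos hi, ← div_div, div_mul_cancel₀ _ (hZ i (by omega)).ne']
    ring
  have hy1 : ∑ j ∈ range (m + 1), y j = 1 :=
    (sum_range_succ_eq_of_eq_zero hm.le hysupp).trans hy.2
  rw [pay_eq_pay_of_support hm.le Z (fun i hi => by rw [hx, if_neg (by omega)]) hysupp,
    pay_eq_of_mul_eq_mul_sub hxZ, hy1]
  ring

/-- for `0 ≤ m < n`, against the equalizing strategy `x̂`, any jammer mixed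
strategy `y` supported on `{0, …, m}` yields expected payoff exactly
`((J_{m+1} - ∑_{j=0}^m y_j J_j)/(J_{m+1} - J_{ave,m})) Z_m`: the payoff depends on `y`
only through its average power. -/
theorem stmt_6 (n : ℕ) (hn : 1 ≤ n) (J Z : ℕ → ℝ)
    (hJ0 : J 0 = 0) (hJmono : ∀ j < n, J j < J (j + 1))
    (hZanti : ∀ j < n, Z (j + 1) < Z j) (hZpos : 0 < Z n)
    (m : ℕ) (hm : m < n) (xhat : ℕ → ℝ)
    (hx : ∀ i, xhat i = if i ≤ m then
      Z m * (J (i + 1) - J i) / ((J (m + 1) - JaveM m J Z) * Z i) else 0) :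
    ∀ y : ℕ → ℝ, IsMixed n y → (∀ j, m < j → y j = 0) →
      pay n Z xhat y
        = ((J (m + 1) - ∑ j ∈ Finset.range (m + 1), y j * J j)
            / (J (m + 1) - JaveM m J Z)) * Z m :=
  stmt_6_general n J Z hZanti hZpos m hm xhat hx
end

section
/- For every 1 ≤ m ≤ n, the average power J_{ave,m} of the jammer's optimal mixed strategy is strictly smaller than the corresponding effective pure jamming power J_m: J_{ave,m} = Z_m·Σ_{j=1}^m (Z_j^{−1} − Z_{j−1}^{−1})·J_j < J_m. -/
open Finset

/-!
The weights `Z_j⁻¹ - Z_{j-1}⁻¹` are nonnegative and telescope to `Z_m⁻¹ - Z_0⁻¹`, while `J_j ≤ J_m`;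
hence `J_{ave,m} ≤ Z_m (Z_m⁻¹ - Z_0⁻¹) J_m = (1 - Z_m / Z_0) J_m < J_m`, as `J_m > J_0 = 0`.
-/

theorem Finset.sum_Icc_one_sub_pred {M : Type*} [AddCommGroup M] (f : ℕ → M) (m : ℕ) :
    ∑ j ∈ Icc 1 m, (f j - f (j - 1)) = f m - f 0 := by
  induction m with
  | zero => simp
  | succ m ih =>
    rw [sum_Icc_succ_top (by omega), ih, Nat.add_sub_cancel]
    abel

theorem Finset.sum_Icc_one_sub_pred_mul_le {R : Type*} [CommRing R] [PartialOrder R]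
    [IsOrderedRing R] {f g : ℕ → R} {m : ℕ} (hf : MonotoneOn f (Set.Iic m))
    (hg : MonotoneOn g (Set.Iic m)) :
    ∑ j ∈ Icc 1 m, (f j - f (j - 1)) * g j ≤ (f m - f 0) * g m :=
  calc ∑ j ∈ Icc 1 m, (f j - f (j - 1)) * g j
      ≤ ∑ j ∈ Icc 1 m, (f j - f (j - 1)) * g m := by
        refine sum_le_sum fun j hj => ?_
        have hjm : j ≤ m := (mem_Icc.1 hj).2
        have hj' : j ∈ Set.Iic m := hjm
        have hj1 : j - 1 ∈ Set.Iic m := Set.mem_Iic.2 (by omega)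
        exact mul_le_mul_of_nonneg_left (hg hj' Set.self_mem_Iic hjm)
          (sub_nonneg.2 (hf hj1 hj' (Nat.sub_le j 1)))
    _ = (f m - f 0) * g m := by rw [← sum_mul, sum_Icc_one_sub_pred]

theorem AntitoneOn.monotoneOn_inv_Iic {Z : ℕ → ℝ} {n : ℕ} (hZ : AntitoneOn Z (Set.Iic n))
    (hpos : 0 < Z n) : MonotoneOn (fun j => (Z j)⁻¹) (Set.Iic n) := fun _ hi _ hj hij =>
  inv_anti₀ (hpos.trans_le (hZ hj Set.self_mem_Iic hj)) (hZ hi hj hij)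

theorem JaveM_le_sub {J Z : ℕ → ℝ} {n m : ℕ} (hm : m ≤ n) (hJ : MonotoneOn J (Set.Iic n))
    (hZ : AntitoneOn Z (Set.Iic n)) (hpos : 0 < Z n) :
    JaveM m J Z ≤ J m - Z m / Z 0 * J m := by
  have hZm : 0 < Z m := hpos.trans_le (hZ hm Set.self_mem_Iic hm)
  have hIic : Set.Iic m ⊆ Set.Iic n := Set.Iic_subset_Iic.2 hm
  calc JaveM m J Z ≤ Z m * (((Z m)⁻¹ - (Z 0)⁻¹) * J m) :=
        mul_le_mul_of_nonneg_left (sum_Icc_one_sub_pred_mul_le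
          ((hZ.monotoneOn_inv_Iic hpos).mono hIic) (hJ.mono hIic)) hZm.le
    _ = J m - Z m / Z 0 * J m := by field_simp

theorem stmt_11_general (n : ℕ) (J Z : ℕ → ℝ)
    (hJ0 : J 0 = 0) (hJmono : ∀ j < n, J j < J (j + 1))
    (hZanti : ∀ j < n, Z (j + 1) < Z j) (hZpos : 0 < Z n)
    (m : ℕ) (hm1 : 1 ≤ m) (hm2 : m ≤ n) :
    JaveM m J Z < J m := by
  have hJ : StrictMonoOn J (Set.Iic n) := strictMonoOn_Iic_of_lt_succ hJmono
  have hZ : StrictAntiOn Z (Set.Iic n) := strictAntiOn_Iic_of_succ_lt hZanti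
  have hJm : 0 < J m := hJ0 ▸ hJ (Set.mem_Iic.2 n.zero_le) (Set.mem_Iic.2 hm2) hm1
  have hZm : 0 < Z m := hZpos.trans_le (hZ.antitoneOn hm2 Set.self_mem_Iic hm2)
  have hZ0 : 0 < Z 0 := hZm.trans_le (hZ.antitoneOn (Set.mem_Iic.2 n.zero_le) hm2 m.zero_le)
  have : 0 < Z m / Z 0 * J m := by positivity
  linarith [JaveM_le_sub hm2 hJ.monotoneOn hZ.antitoneOn hZpos]

/-- for every `1 ≤ m ≤ n`, the optimal average jamming power `J_{ave,m}` is
strictly smaller than the effective pure jamming power `J_m`. -/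
theorem stmt_11 (n : ℕ) (hn : 1 ≤ n) (J Z : ℕ → ℝ)
    (hJ0 : J 0 = 0) (hJmono : ∀ j < n, J j < J (j + 1))
    (hZanti : ∀ j < n, Z (j + 1) < Z j) (hZpos : 0 < Z n)
    (m : ℕ) (hm1 : 1 ≤ m) (hm2 : m ≤ n) :
    JaveM m J Z < J m :=
  stmt_11_general n J Z hJ0 hJmono hZanti hZpos m hm1 hm2
end

section
/- The sequence of critical average jamming powers is strictly increasing: for every 0 ≤ m < n, J_{ave,m} < J_{ave,m+1}. Moreover, J_{ave,m+1} = (Z_{m+1}/Z_m)·J_{ave,m} + (1 − Z_{m+1}/Z_m)·J_{m+1}, i.e., J_{ave,m+1} is a strict convex combination of J_{ave,m} and J_{m+1}. -/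
open Finset

/-! The recursion places `J_{ave,m+1}` on the segment from `J_{m+1}` to `J_{ave,m}` at parameter
`Z_{m+1}/Z_m ∈ (0, 1)`. Inductively `J_{ave,m} ≤ J_m < J_{m+1}`, so this point lies strictly
to the right of `J_{ave,m}`. -/

open AffineMap

lemma JaveM_zero (J Z : ℕ → ℝ) : JaveM 0 J Z = 0 := by
  simp [JaveM]

lemma JaveM_succ_eq_lineMap (m : ℕ) (J Z : ℕ → ℝ) (hZm : Z m ≠ 0) (hZm' : Z (m + 1) ≠ 0) :
    JaveM (m + 1) J Z = lineMap (J (m + 1)) (JaveM m J Z) (Z (m + 1) / Z m) := by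
  rw [lineMap_apply_ring, JaveM, JaveM, sum_Icc_succ_top (Nat.le_add_left 1 m),
    Nat.add_sub_cancel]
  field_simp
  ring

section

variable {n : ℕ} {J Z : ℕ → ℝ}

lemma pos_of_le_of_succ_lt (hZanti : ∀ j < n, Z (j + 1) < Z j) (hZpos : 0 < Z n) {j : ℕ}
    (hj : j ≤ n) : 0 < Z j :=
  hZpos.trans_le ((strictAntiOn_Iic_of_succ_lt hZanti).antitoneOn hj Set.self_mem_Iic hj)

lemma succ_div_lt_one (hZanti : ∀ j < n, Z (j + 1) < Z j) (hZpos : 0 < Z n) {m : ℕ}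
    (hm : m < n) : Z (m + 1) / Z m < 1 :=
  (div_lt_one (pos_of_le_of_succ_lt hZanti hZpos hm.le)).2 (hZanti m hm)

lemma JaveM_le (hJ0 : J 0 = 0) (hJmono : ∀ j < n, J j < J (j + 1))
    (hZanti : ∀ j < n, Z (j + 1) < Z j) (hZpos : 0 < Z n) {m : ℕ} (hm : m ≤ n) :
    JaveM m J Z ≤ J m := by
  induction m with
  | zero => rw [JaveM_zero, hJ0]
  | succ m ih =>
    have hZm := pos_of_le_of_succ_lt hZanti hZpos (Nat.le_of_succ_le hm)
    have hZm' := pos_of_le_of_succ_lt hZanti hZpos hm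
    rw [JaveM_succ_eq_lineMap m J Z hZm.ne' hZm'.ne']
    refine ((lineMap_lt_left_iff_lt (div_pos hZm' hZm)).2 ?_).le
    exact (ih (Nat.le_of_succ_le hm)).trans_lt (hJmono m hm)

end

theorem stmt_12_general (n : ℕ) (J Z : ℕ → ℝ)
    (hJ0 : J 0 = 0) (hJmono : ∀ j < n, J j < J (j + 1))
    (hZanti : ∀ j < n, Z (j + 1) < Z j) (hZpos : 0 < Z n)
    (m : ℕ) (hm : m < n) :
    JaveM m J Z < JaveM (m + 1) J Z ∧
    JaveM (m + 1) J Z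
      = Z (m + 1) / Z m * JaveM m J Z + (1 - Z (m + 1) / Z m) * J (m + 1) := by
  have hZm := pos_of_le_of_succ_lt hZanti hZpos hm.le
  have hZm' := pos_of_le_of_succ_lt hZanti hZpos hm
  rw [JaveM_succ_eq_lineMap m J Z hZm.ne' hZm'.ne']
  refine ⟨(right_lt_lineMap_iff_lt (succ_div_lt_one hZanti hZpos hm)).2 ?_, ?_⟩
  · exact (JaveM_le hJ0 hJmono hZanti hZpos hm.le).trans_lt (hJmono m hm)
  · rw [lineMap_apply_ring]
    ring

/-- the critical average jamming powers are strictly increasing, and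
`J_{ave,m+1}` is the strict convex combination
`(Z_{m+1}/Z_m) J_{ave,m} + (1 - Z_{m+1}/Z_m) J_{m+1}`. -/
theorem stmt_12 (n : ℕ) (hn : 1 ≤ n) (J Z : ℕ → ℝ)
    (hJ0 : J 0 = 0) (hJmono : ∀ j < n, J j < J (j + 1))
    (hZanti : ∀ j < n, Z (j + 1) < Z j) (hZpos : 0 < Z n)
    (m : ℕ) (hm : m < n) :
    JaveM m J Z < JaveM (m + 1) J Z ∧
    JaveM (m + 1) J Z
      = Z (m + 1) / Z m * JaveM m J Z + (1 - Z (m + 1) / Z m) * J (m + 1) :=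
  stmt_12_general n J Z hJ0 hJmono hZanti hZpos m hm
end

section
/- For every 0 ≤ i < n, the quantity U_i = (1 − R_n/R_i)·((n+1)/(2(n−i)))·J_max is maximized at i = 0; equivalently, for all 0 ≤ i < n, (1 − R_n/R_i)/(n − i) ≤ (1 − R_n/R_0)/n. -/
/-!
Put `φ a = 1 / log (1 + 1 / a)`. Then `R i = 1 / (2 φ (x i))` at the equally spaced points
`x i = (N + (i / n) J_max) / P`, and the claim says that the secant slope of `φ` towards `x n`
decreases when its other end point moves from `x i` down to `x 0`; this is concavity of `φ`.
With `L = log (1 + 1 / a)` one has `φ' = 1 / (a (a + 1) L²)`, and `a (a + 1) L²` increases because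
`(2a + 1) L ≥ 2`, the first term of the series `L = ∑ 2 / ((2k + 1) (2a + 1) ^ (2k + 1))`.
-/

open Real Set

lemma two_div_le_log_one_add_inv {a : ℝ} (ha : 0 < a) : 2 / (2 * a + 1) ≤ log (1 + a⁻¹) := by
  simpa [div_eq_mul_inv] using le_hasSum (hasSum_log_one_add_inv ha) 0 fun k _ ↦ by positivity

lemma hasDerivAt_log_one_add_inv {a : ℝ} (ha : 0 < a) :
    HasDerivAt (fun x ↦ log (1 + x⁻¹)) (-(a * (a + 1))⁻¹) a := by
  convert ((hasDerivAt_inv ha.ne').const_add 1).log (by positivity) using 1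
  field_simp

lemma concaveOn_inv_log_one_add_inv : ConcaveOn ℝ (Ioi 0) fun a : ℝ ↦ (log (1 + a⁻¹))⁻¹ := by
  set L : ℝ → ℝ := fun a ↦ log (1 + a⁻¹)
  have hL : ∀ a : ℝ, 0 < a → 0 < L a := fun a ha ↦ log_pos (by simpa using ha)
  have hL' (a : ℝ) (ha : 0 < a) : HasDerivAt L (-(a * (a + 1))⁻¹) a := hasDerivAt_log_one_add_inv ha
  set g : ℝ → ℝ := fun a ↦ a * (a + 1) * L a ^ 2
  have hg : ∀ a : ℝ, 0 < a → 0 < g a := fun a ha ↦ by have := hL a ha; positivity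
  have hf' (a : ℝ) (ha : 0 < a) : HasDerivAt (fun x ↦ (L x)⁻¹) (g a)⁻¹ a :=
    ((hL' a ha).inv (hL a ha).ne').congr_deriv (by simp only [g]; field_simp)
  have hg' (a : ℝ) (ha : 0 < a) : HasDerivAt g (L a * ((2 * a + 1) * L a - 2)) a :=
    (((hasDerivAt_id' a).fun_mul ((hasDerivAt_id' a).add_const 1)).fun_mul
      ((hL' a ha).fun_pow 2)).congr_deriv (by field_simp; norm_num; ring)
  refine concaveOn_of_hasDerivWithinAt2_nonpos (convex_Ioi 0)
    (f' := fun a ↦ (g a)⁻¹) (f'' := fun a ↦ -(L a * ((2 * a + 1) * L a - 2)) / g a ^ 2)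
    (fun a ha ↦ (hf' a ha).continuousAt.continuousWithinAt) ?_ ?_ ?_ <;>
    simp only [interior_Ioi] <;> intro a (ha : 0 < a)
  · exact (hf' a ha).hasDerivWithinAt
  · exact ((hg' a ha).inv (hg a ha).ne').hasDerivWithinAt
  · have hL_ge : 2 ≤ (2 * a + 1) * L a :=
      (div_le_iff₀' (by positivity)).1 (two_div_le_log_one_add_inv ha)
    have hg'_nonneg : 0 ≤ L a * ((2 * a + 1) * L a - 2) := mul_nonneg (hL a ha).le (by linarith [hL_ge])
    exact div_nonpos_of_nonpos_of_nonneg (neg_nonpos.2 hg'_nonneg) (sq_nonneg _)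

lemma concaveOn_inv_log_one_add_div {P N J : ℝ} (hP : 0 < P) (hN : 0 < N) (hJ : 0 ≤ J) :
    ConcaveOn ℝ (Ici 0) fun t : ℝ ↦ (log (1 + P / (N + t * J)))⁻¹ := by
  have hlin (t : ℝ) : AffineMap.lineMap (N / P) ((N + J) / P) t = (N + t * J) / P := by
    rw [AffineMap.lineMap_apply_ring']
    field_simp
    ring
  refine ((concaveOn_inv_log_one_add_inv.comp_affineMap
    (AffineMap.lineMap (N / P) ((N + J) / P))).subset ?_ (convex_Ici 0)).congr ?_
  · intro t (ht : 0 ≤ t)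
    simp only [mem_preimage, hlin, mem_Ioi]
    positivity
  · intro t _
    simp only [Function.comp_apply, hlin, inv_div]

lemma one_sub_div_div_sub_le_of_concaveOn_inv {s : Set ℝ} {g : ℝ → ℝ} {x y z : ℝ}
    (hg : ConcaveOn ℝ s fun t ↦ (g t)⁻¹) (hx : x ∈ s) (hy : y ∈ s) (hz : z ∈ s)
    (hxy : x ≤ y) (hyz : y < z) (hgz : 0 < g z) :
    (1 - g z / g y) / (z - y) ≤ (1 - g z / g x) / (z - x) := by
  have hslope := hg.slope_anti hz ⟨hx, (hxy.trans_lt hyz).ne⟩ ⟨hy, hyz.ne⟩ hxy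
  have key (w : ℝ) (hwz : w < z) :
      (1 - g z / g w) / (z - w) = g z * slope (fun t ↦ (g t)⁻¹) z w := by
    have := hgz.ne'
    have := sub_ne_zero.2 hwz.ne'
    rw [slope_comm, slope_def_field]
    field_simp
  rw [key y hyz, key x (hxy.trans_lt hyz)]
  exact mul_le_mul_of_nonneg_left hslope hgz.le

theorem stmt_15_general (n : ℕ) (P N Jmax : ℝ)
    (hP : 0 < P) (hN : 0 < N) (hJmax : 0 < Jmax)
    (R : ℕ → ℝ)
    (hR : ∀ i, R i = 1 / 2 * Real.log (1 + P / (N + (i : ℝ) / n * Jmax))) :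
    ∀ i < n,
      (1 - R n / R i) * (((n : ℝ) + 1) / (2 * ((n : ℝ) - (i : ℝ)))) * Jmax
        ≤ (1 - R n / R 0) * (((n : ℝ) + 1) / (2 * (n : ℝ))) * Jmax ∧
      (1 - R n / R i) / ((n : ℝ) - (i : ℝ)) ≤ (1 - R n / R 0) / (n : ℝ) := by
  intro i hi
  have hn : (0 : ℝ) < n := by exact_mod_cast Nat.zero_lt_of_lt hi
  have hin : (i : ℝ) < n := by exact_mod_cast hi
  set g : ℝ → ℝ := fun t ↦ log (1 + P / (N + t * Jmax))
  have hratio (k : ℕ) : R n / R k = g 1 / g (k / n) := by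
    rw [hR, hR, div_self hn.ne', mul_div_mul_left _ _ (by norm_num)]
  have hslope := one_sub_div_div_sub_le_of_concaveOn_inv (g := g)
    (concaveOn_inv_log_one_add_div hP hN hJmax.le) (x := 0) (y := i / n) (z := 1)
    self_mem_Ici (mem_Ici.2 (by positivity)) (mem_Ici.2 zero_le_one) (by positivity)
    ((div_lt_one hn).2 hin) (log_pos (by simp; positivity))
  have hsecond : (1 - R n / R i) / (n - i) ≤ (1 - R n / R 0) / n := by
    rw [hratio, hratio, Nat.cast_zero, zero_div]
    simp only [sub_zero, div_one] at hslope
    rw [one_sub_div hn.ne', div_div_eq_mul_div, div_le_iff₀ (by linarith)] at hslope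
    rw [div_le_div_iff₀ (by linarith) hn]
    linarith
  refine ⟨?_, hsecond⟩
  have hni : (n : ℝ) - i ≠ 0 := by linarith
  calc (1 - R n / R i) * ((n + 1) / (2 * (n - i))) * Jmax
      = (1 - R n / R i) / (n - i) * ((n + 1) / 2 * Jmax) := by field_simp
    _ ≤ (1 - R n / R 0) / n * ((n + 1) / 2 * Jmax) := by gcongr
    _ = (1 - R n / R 0) * ((n + 1) / (2 * n)) * Jmax := by field_simp

/-- the quantity `U_i = (1 - R_n/R_i)((n+1)/(2(n-i))) J_max` is maximized at
`i = 0`; equivalently `(1 - R_n/R_i)/(n - i) ≤ (1 - R_n/R_0)/n` for all `0 ≤ i < n`. -/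
theorem stmt_15 (n : ℕ) (hn : 1 ≤ n) (P N Jmax : ℝ)
    (hP : 0 < P) (hN : 0 < N) (hJmax : 0 < Jmax)
    (R : ℕ → ℝ)
    (hR : ∀ i, R i = 1 / 2 * Real.log (1 + P / (N + (i : ℝ) / n * Jmax))) :
    ∀ i < n,
      (1 - R n / R i) * (((n : ℝ) + 1) / (2 * ((n : ℝ) - (i : ℝ)))) * Jmax
        ≤ (1 - R n / R 0) * (((n : ℝ) + 1) / (2 * (n : ℝ))) * Jmax ∧
      (1 - R n / R i) / ((n : ℝ) - (i : ℝ)) ≤ (1 - R n / R 0) / (n : ℝ) :=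
  stmt_15_general n P N Jmax hP hN hJmax R hR
end

section
/- For all real numbers a, b with 0 < b < a, the following inequality holds: a·(a − b)·ln(1 + b) > b·(1 + a)·ln(1 + a)·(ln(1 + a) − ln(1 + b)). -/
/-!
Fix `b > 0` and regard the difference of the two sides as a function `gap b` of `x = a ≥ b`.
Both `gap b` and its derivative vanish at `x = b`, and the second derivative is increasing on
`[b, ∞)`; it is positive at `x = b` exactly because `log (1 + b) > 2b / (2 + b)`. Hence all three
are positive on `(b, ∞)`.
-/

open Real Set

lemma pos_of_hasDerivAt_pos_of_nonneg {f f' : ℝ → ℝ} {b x : ℝ}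
    (hf : ∀ y, b ≤ y → HasDerivAt f (f' y) y) (hf' : ∀ y, b < y → 0 < f' y)
    (hfb : 0 ≤ f b) (hx : b < x) : 0 < f x := by
  have hmono : StrictMonoOn f (Ici b) := by
    refine strictMonoOn_of_deriv_pos (convex_Ici b)
      (fun y hy => (hf y hy).continuousAt.continuousWithinAt) fun y hy => ?_
    rw [interior_Ici] at hy
    rw [(hf y hy.le).deriv]
    exact hf' y hy
  linarith [hmono self_mem_Ici hx.le hx]

namespace LogGap

variable (b : ℝ)

noncomputable def gap (x : ℝ) : ℝ :=
  x * (x - b) * log (1 + b) - b * (1 + x) * log (1 + x) * (log (1 + x) - log (1 + b))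

noncomputable def gapDeriv (x : ℝ) : ℝ :=
  (2 * x - b) * log (1 + b)
    - b * ((log (1 + x) + 1) * (log (1 + x) - log (1 + b)) + log (1 + x))

noncomputable def gapDeriv2 (x : ℝ) : ℝ :=
  2 * log (1 + b) - b * (2 * log (1 + x) - log (1 + b) + 2) / (1 + x)

variable {b}

lemma hasDerivAt_log_one_add {x : ℝ} (hx : -1 < x) :
    HasDerivAt (fun y => log (1 + y)) (1 / (1 + x)) x :=
  ((hasDerivAt_id' x).const_add 1).log (by linarith)

lemma hasDerivAt_gap {x : ℝ} (hx : -1 < x) : HasDerivAt (gap b) (gapDeriv b x) x := by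
  have hL := hasDerivAt_log_one_add hx
  have h := (((hasDerivAt_id' x).mul ((hasDerivAt_id' x).sub_const b)).mul_const
    (log (1 + b))).sub ((((hasDerivAt_const x b).mul ((hasDerivAt_id' x).const_add 1)).mul
      hL).mul (hL.sub_const (log (1 + b))))
  refine h.congr_deriv ?_
  have : 1 + x ≠ 0 := by linarith
  simp only [gapDeriv, Pi.mul_apply]
  field_simp
  ring

lemma hasDerivAt_gapDeriv {x : ℝ} (hx : -1 < x) :
    HasDerivAt (gapDeriv b) (gapDeriv2 b x) x := by
  have hL := hasDerivAt_log_one_add hx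
  have h := ((((hasDerivAt_id' x).const_mul 2).sub_const b).mul_const (log (1 + b))).sub
    ((((hL.add_const 1).mul (hL.sub_const (log (1 + b)))).add hL).const_mul b)
  refine h.congr_deriv ?_
  have : 1 + x ≠ 0 := by linarith
  unfold gapDeriv2
  field_simp
  ring

lemma hasDerivAt_gapDeriv2 {x : ℝ} (hx : -1 < x) :
    HasDerivAt (gapDeriv2 b) (b * (2 * log (1 + x) - log (1 + b)) / (1 + x) ^ 2) x := by
  have hL := hasDerivAt_log_one_add hx
  have : 1 + x ≠ 0 := by linarith
  have h := ((((hL.const_mul 2).sub_const (log (1 + b))).add_const 2).const_mul b).div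
    ((hasDerivAt_id' x).const_add 1) this |>.const_sub (2 * log (1 + b))
  refine h.congr_deriv ?_
  field_simp
  ring

lemma gapDeriv2_pos (hb : 0 < b) {x : ℝ} (hx : b < x) : 0 < gapDeriv2 b x := by
  refine pos_of_hasDerivAt_pos_of_nonneg (fun y hy => hasDerivAt_gapDeriv2 (by linarith))
    (fun y hy => ?_) ?_ hx
  · have hs : 0 < log (1 + b) := log_pos (by linarith)
    have hsy : log (1 + b) < log (1 + y) := log_lt_log (by linarith) (by linarith)
    exact div_pos (mul_pos hb (by linarith)) (pow_pos (by linarith) 2)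
  · have h := lt_log_one_add_of_pos hb
    rw [div_lt_iff₀ (by linarith)] at h
    rw [gapDeriv2, sub_nonneg, div_le_iff₀ (by linarith)]
    linarith

lemma gapDeriv_pos (hb : 0 < b) {x : ℝ} (hx : b < x) : 0 < gapDeriv b x :=
  pos_of_hasDerivAt_pos_of_nonneg (fun y hy => hasDerivAt_gapDeriv (by linarith))
    (fun y hy => gapDeriv2_pos hb hy) (le_of_eq (by rw [gapDeriv]; ring)) hx

lemma gap_pos (hb : 0 < b) {x : ℝ} (hx : b < x) : 0 < gap b x :=
  pos_of_hasDerivAt_pos_of_nonneg (fun y hy => hasDerivAt_gap (by linarith))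
    (fun y hy => gapDeriv_pos hb hy) (by simp [gap]) hx

end LogGap

/-- for all `0 < b < a`,
`a (a - b) ln(1 + b) > b (1 + a) ln(1 + a) (ln(1 + a) - ln(1 + b))`. -/
theorem stmt_16 (a b : ℝ) (hb : 0 < b) (hba : b < a) :
    b * (1 + a) * Real.log (1 + a) * (Real.log (1 + a) - Real.log (1 + b))
      < a * (a - b) * Real.log (1 + b) :=
  sub_pos.mp (LogGap.gap_pos hb hba)
end

section
/- Let P > 0, N > 0, J_max > 0 be real numbers, and define R(J) = (1/2)·ln(1 + P/(N + J)) and F(J) = (J_max/(J_max − J))·(1 − R(J_max)/R(J)) for J ∈ [0, J_max). Then F is strictly decreasing on [0, J_max): for all 0 ≤ J' < J'' < J_max, F(J'') < F(J'). -/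
/-!
Write `g t = 1 / log (1 + P / t)`, so that `R J = 1 / (2 g (N + J))`. Then
`F J = (J_max / g (N + J_max)) · (g (N + J) - g (N + J_max)) / (J - J_max)`, a positive multiple
of the slope of the secant of `g` through `N + J_max`. The function `g` is strictly concave on
`(0, ∞)`: its second derivative has the sign of `2 P - (2 t + P) log (1 + P / t)`, which is
negative by `log (1 + x) > 2 x / (x + 2)`. Hence the secant slope, and with it `F`, strictly
decreases.
-/

open Real Set

section InvLogOneAddDiv

variable {P t : ℝ}

lemma log_one_add_div_pos (hP : 0 < P) (ht : 0 < t) : 0 < log (1 + P / t) :=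
  log_pos (by simp only [lt_add_iff_pos_right]; positivity)

lemma hasDerivAt_log_one_add_div (hP : 0 < P) (ht : 0 < t) :
    HasDerivAt (fun s ↦ log (1 + P / s)) (-(P / (t * (t + P)))) t := by
  have h := ((hasDerivAt_inv ht.ne').const_mul P |>.const_add 1).log
    (by simp only [← div_eq_mul_inv]; positivity)
  convert h using 1
  · simp only [div_eq_mul_inv]
  · rw [← div_eq_mul_inv]
    field_simp

lemma hasDerivAt_inv_log_one_add_div (hP : 0 < P) (ht : 0 < t) :
    HasDerivAt (fun s ↦ (log (1 + P / s))⁻¹)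
      (P / (t * (t + P) * log (1 + P / t) ^ 2)) t := by
  refine ((hasDerivAt_log_one_add_div hP ht).inv (log_one_add_div_pos hP ht).ne').congr_deriv ?_
  field_simp

lemma deriv2_inv_log_one_add_div_neg (hP : 0 < P) (ht : 0 < t) :
    deriv^[2] (fun s ↦ (log (1 + P / s))⁻¹) t < 0 := by
  set L := log (1 + P / t) with hL
  have hLpos : 0 < L := log_one_add_div_pos hP ht
  have hderiv : deriv (fun s ↦ (log (1 + P / s))⁻¹) =ᶠ[nhds t]
      fun s ↦ P / (s * (s + P) * log (1 + P / s) ^ 2) := by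
    filter_upwards [lt_mem_nhds ht] with s hs
    exact (hasDerivAt_inv_log_one_add_div hP hs).deriv
  have hdenom : HasDerivAt (fun s ↦ s * (s + P) * log (1 + P / s) ^ 2)
      ((2 * t + P) * L ^ 2 - 2 * P * L) t := by
    refine (((hasDerivAt_id' t).fun_mul ((hasDerivAt_id' t).add_const P)).fun_mul
      ((hasDerivAt_log_one_add_div hP ht).fun_pow 2)).congr_deriv ?_
    rw [← hL]
    field_simp
    ring
  have hsecond : HasDerivAt (fun s ↦ P / (s * (s + P) * log (1 + P / s) ^ 2))
      ((0 * (t * (t + P) * L ^ 2) - P * ((2 * t + P) * L ^ 2 - 2 * P * L)) /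
        (t * (t + P) * L ^ 2) ^ 2) t :=
    (hasDerivAt_const t P).div hdenom (by positivity)
  rw [Function.iterate_succ_apply, Function.iterate_one, hderiv.deriv_eq, hsecond.deriv]
  have hlog : 2 * P < (2 * t + P) * L := by
    have h := lt_log_one_add_of_pos (div_pos hP ht)
    rw [← hL, div_lt_iff₀ (by positivity)] at h
    field_simp at h
    linarith
  have hnum : 0 < (2 * t + P) * L ^ 2 - 2 * P * L := by nlinarith
  have hden : 0 < (t * (t + P) * L ^ 2) ^ 2 := by positivity
  rw [zero_mul, zero_sub, neg_div]
  exact neg_neg_of_pos (div_pos (mul_pos hP hnum) hden)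

lemma strictConcaveOn_inv_log_one_add_div (hP : 0 < P) :
    StrictConcaveOn ℝ (Ioi 0) (fun s ↦ (log (1 + P / s))⁻¹) :=
  strictConcaveOn_of_deriv2_neg (convex_Ioi 0)
    (fun _ hs ↦ (hasDerivAt_inv_log_one_add_div hP hs).continuousAt.continuousWithinAt)
    (fun _ hs ↦ deriv2_inv_log_one_add_div_neg hP (interior_subset hs))

end InvLogOneAddDiv

/-- with `R(J) = (1/2) ln(1 + P/(N + J))` and
`F(J) = (J_max/(J_max - J))(1 - R(J_max)/R(J))`, the function `F` is strictly decreasing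
on `[0, J_max)`. -/
theorem stmt_17 (P N Jmax : ℝ) (hP : 0 < P) (hN : 0 < N) (hJmax : 0 < Jmax)
    (R F : ℝ → ℝ)
    (hR : ∀ Jv : ℝ, R Jv = 1 / 2 * Real.log (1 + P / (N + Jv)))
    (hF : ∀ Jv : ℝ, F Jv = Jmax / (Jmax - Jv) * (1 - R Jmax / R Jv)) :
    ∀ J' J'' : ℝ, 0 ≤ J' → J' < J'' → J'' < Jmax → F J'' < F J' := by
  intro J' J'' hJ' hlt hJ''
  set g : ℝ → ℝ := fun s ↦ (log (1 + P / s))⁻¹ with hg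
  have hF_slope : ∀ J, 0 ≤ J → J < Jmax →
      F J = Jmax / g (N + Jmax) * ((g (N + J) - g (N + Jmax)) / ((N + J) - (N + Jmax))) := by
    intro J hJ hJmax'
    have hlogJ := log_one_add_div_pos hP (show 0 < N + J by linarith)
    have hlogmax := log_one_add_div_pos hP (show 0 < N + Jmax by linarith)
    have hne : Jmax - J ≠ 0 := by linarith
    have hne' : N + J - (N + Jmax) ≠ 0 := by linarith
    simp only [hF, hR, hg]
    generalize log (1 + P / (N + J)) = a at *
    generalize log (1 + P / (N + Jmax)) = b at *
    field_simp
    ring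
  have hslope := (strictConcaveOn_inv_log_one_add_div hP).secant_strict_mono
    (a := N + Jmax) (x := N + J') (y := N + J'')
    (by simp only [mem_Ioi]; linarith) (by simp only [mem_Ioi]; linarith)
    (by simp only [mem_Ioi]; linarith) (by linarith) (by linarith) (by linarith)
  rw [hF_slope J'' (by linarith) hJ'', hF_slope J' hJ' (by linarith)]
  exact mul_lt_mul_of_pos_left hslope
    (div_pos hJmax (inv_pos.mpr (log_one_add_div_pos hP (by linarith))))
end
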